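/- Let M be a complete Mealy machine whose relation ≈ on Q^M has exactly n equivalence classes, let T be a tree with a functional simulation f : T → M, and let S ⊆ Q^T be a set of pairwise apart states with |S| = n. If p ∈ Q^T is apart from every state of S except one state q' ∈ S (i.e., ¬(p # q') and p # s for all s ∈ S \ {q'}), then f(p) ≈ f(q'). -/

import Mathlib

open scoped Classical

/-- A Mealy machine over input alphabet `I` and output alphabet `O`, with state
type `Q`, initial state `q0`, and a partial combined output/transition map
`trans : Q × I ⇀ O × Q` (so the output and transition functions are defined on
exactly the same pairs). -/
structure Mealy (Q I O : Type) where
  q0 : Q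
  trans : Q → I → Option (O × Q)

namespace Mealy

variable {Q Q' I O : Type}

/-- Extension of the combined output/transition map to input words. -/
def stepStar (M : Mealy Q I O) : Q → List I → Option (List O × Q)
  | q, [] => some ([], q)
  | q, i :: σ => (M.trans q i).bind fun p =>
      (stepStar M p.2 σ).map fun r => (p.1 :: r.1, r.2)

/-- `λ(q, σ)`: the output word produced from `q` on input word `σ` (if defined);
this is also the semantics `⟦q⟧ : I* ⇀ O*` of the state `q`. -/
def outStar (M : Mealy Q I O) (q : Q) (σ : List I) : Option (List O) :=
  (M.stepStar q σ).map Prod.fst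

/-- `δ(q, σ)`: the state reached from `q` on input word `σ` (if defined). -/
def delStar (M : Mealy Q I O) (q : Q) (σ : List I) : Option Q :=
  (M.stepStar q σ).map Prod.snd

/-- `σ ⊢ q # p`: the word `σ` witnesses apartness of `q` and `p`. -/
def ApartW (M : Mealy Q I O) (σ : List I) (q p : Q) : Prop :=
  (M.outStar q σ).isSome ∧ (M.outStar p σ).isSome ∧ M.outStar q σ ≠ M.outStar p σ

/-- `q # p`: states `q` and `p` are apart. -/
def Apart (M : Mealy Q I O) (q p : Q) : Prop := ∃ σ, M.ApartW σ q p

/-- `q ≈ r`: states `q` (of `M`) and `r` (of `N`) are equivalent, i.e. have equal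
semantics `⟦q⟧ = ⟦r⟧` as partial maps `I* ⇀ O*`. -/
def StateEquiv (M : Mealy Q I O) (N : Mealy Q' I O) (q : Q) (r : Q') : Prop :=
  ∀ σ, M.outStar q σ = N.outStar r σ

/-- A functional simulation `f : M → N`. -/
def FunSim (M : Mealy Q I O) (N : Mealy Q' I O) (f : Q → Q') : Prop :=
  f M.q0 = N.q0 ∧
    ∀ q i o q'', M.trans q i = some (o, q'') → N.trans (f q) i = some (o, f q'')

/-- A Mealy machine is complete if its transition map is total. -/
def Complete (M : Mealy Q I O) : Prop := ∀ q i, (M.trans q i).isSome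

/-- A Mealy machine is a tree if every state is reached from the root by a
unique input word (its access sequence). -/
def IsTree (M : Mealy Q I O) : Prop :=
  ∀ q : Q, ∃! σ : List I, M.delStar M.q0 σ = some q

/-- `S` is a basis of the observation tree `T`: a subtree containing the root
whose states are pairwise apart. -/
structure IsBasis (T : Mealy Q I O) (S : Set Q) : Prop where
  root_mem : T.q0 ∈ S
  subtree_closed : ∀ q i o q', T.trans q i = some (o, q') → q' ∈ S → q ∈ S
  pairwise_apart : ∀ p ∈ S, ∀ q ∈ S, p ≠ q → T.Apart p q

/-- The frontier `F`: immediate non-basis successors of basis states. -/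
def frontier (T : Mealy Q I O) (S : Set Q) : Set Q :=
  {q' | q' ∉ S ∧ ∃ q ∈ S, ∃ i o, T.trans q i = some (o, q')}

/-- The basis `S` is complete: each basis state has a transition for each input. -/
def BasisComplete (T : Mealy Q I O) (S : Set Q) : Prop :=
  ∀ q ∈ S, ∀ i : I, (T.trans q i).isSome

/-- A Mealy machine `H` with state set `S` contains the basis `S` of `T`:
`δ^H(q0^H, access(q)) = q` for every `q ∈ S`. -/
def ContainsBasis (T : Mealy Q I O) (S : Set Q) (H : Mealy ↥S I O) : Prop :=
  ∀ (q : ↥S) (σ : List I), T.delStar T.q0 σ = some (q : Q) → H.delStar H.q0 σ = some q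

/-- `H` is a hypothesis for the observation tree `T` with basis `S`. -/
def IsHypothesis (T : Mealy Q I O) (S : Set Q) (H : Mealy ↥S I O) : Prop :=
  H.Complete ∧ ContainsBasis T S H ∧
    ∀ (q : ↥S) (i : I) (o' : O) (p' : ↥S), H.trans q i = some (o', p') →
      ∀ (o : O) (p : Q), T.trans (q : Q) i = some (o, p) → o = o' ∧ ¬ T.Apart p (p' : Q)

/-- The equivalence `≈` on the states of a single machine, as a setoid. -/
def equivSetoid (M : Mealy Q I O) : Setoid Q :=
  ⟨fun q r => M.StateEquiv M q r,
   ⟨fun _ _ => rfl, fun h σ => (h σ).symm, fun h1 h2 σ => (h1 σ).trans (h2 σ)⟩⟩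

/-- `R` is a bisimulation between `M` and `N`. -/
def IsBisimulation (M : Mealy Q I O) (N : Mealy Q' I O) (R : Q → Q' → Prop) : Prop :=
  R M.q0 N.q0 ∧
    ∀ q r, R q r → ∀ i o q', M.trans q i = some (o, q') →
      ∃ r', N.trans r i = some (o, r') ∧ R q' r'

end Mealy


/-!
Pairwise apart states of `T` are mapped by `f` to pairwise inequivalent states of `M`, because a
functional simulation preserves outputs and hence apartness. With `|S| = n`, the states `f s`
(`s ∈ S`) therefore meet every `≈`-class of `M`, in particular the class of `f p`, say `f p ≈ f s`.
Since `f p` is inequivalent to `f s` whenever `p # s`, the only possible choice is `s = q'`.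
-/

namespace Mealy

variable {Q Q' I O : Type}

theorem FunSim.stepStar_eq_some {M : Mealy Q I O} {N : Mealy Q' I O} {f : Q → Q'}
    (hf : M.FunSim N f) :
    ∀ {σ : List I} {q q'' : Q} {w : List O},
      M.stepStar q σ = some (w, q'') → N.stepStar (f q) σ = some (w, f q'')
  | [], q, q'', w, h => by
    simp only [stepStar, Option.some.injEq, Prod.mk.injEq] at h ⊢
    exact ⟨h.1, congrArg f h.2⟩
  | i :: σ, q, q'', w, h => by
    simp only [stepStar, Option.bind_eq_some_iff, Option.map_eq_some_iff] at h ⊢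
    obtain ⟨⟨o, r⟩, hstep, ⟨w', r'⟩, hrest, hw⟩ := h
    simp only [Prod.mk.injEq] at hw
    obtain ⟨rfl, rfl⟩ := hw
    exact ⟨(o, f r), hf.2 q i o r hstep, (w', f r'), hf.stepStar_eq_some hrest, rfl⟩

theorem FunSim.outStar_eq_some {M : Mealy Q I O} {N : Mealy Q' I O} {f : Q → Q'}
    (hf : M.FunSim N f) {q : Q} {σ : List I} {w : List O} (h : M.outStar q σ = some w) :
    N.outStar (f q) σ = some w := by
  obtain ⟨⟨w, q''⟩, hstep, rfl⟩ := Option.map_eq_some_iff.1 h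
  simp [outStar, hf.stepStar_eq_some hstep]

theorem FunSim.apart {M : Mealy Q I O} {N : Mealy Q' I O} {f : Q → Q'} (hf : M.FunSim N f)
    {q p : Q} (h : M.Apart q p) : N.Apart (f q) (f p) := by
  obtain ⟨σ, hq, hp, hne⟩ := h
  obtain ⟨w, hw⟩ := Option.isSome_iff_exists.1 hq
  obtain ⟨v, hv⟩ := Option.isSome_iff_exists.1 hp
  refine ⟨σ, ?_, ?_, ?_⟩ <;>
    simp_all only [hf.outStar_eq_some hw, hf.outStar_eq_some hv, Option.isSome_some, ne_eq,
      not_false_eq_true]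

theorem Apart.not_stateEquiv {M : Mealy Q I O} {q p : Q} (h : M.Apart q p) :
    ¬ M.StateEquiv M q p := fun he =>
  let ⟨σ, _, _, hne⟩ := h
  hne (he σ)

theorem FunSim.injective_mk_of_pairwise_apart {M : Mealy Q I O} {N : Mealy Q' I O}
    {f : Q → Q'} (hf : M.FunSim N f) {S : Set Q}
    (hpair : ∀ p ∈ S, ∀ q ∈ S, p ≠ q → M.Apart p q) :
    Function.Injective fun s : S => (Quotient.mk N.equivSetoid (f s)) := by
  intro s t hst
  by_contra hne
  exact (hf.apart (hpair s s.2 t t.2 (Subtype.coe_ne_coe.2 hne))).not_stateEquiv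
    (Quotient.exact hst)

theorem FunSim.exists_mem_stateEquiv_of_card_eq [Finite Q] [Finite Q'] {M : Mealy Q I O}
    {N : Mealy Q' I O} {f : Q → Q'} (hf : M.FunSim N f) {S : Set Q}
    (hpair : ∀ p ∈ S, ∀ q ∈ S, p ≠ q → M.Apart p q)
    (hcard : Nat.card S = Nat.card (Quotient N.equivSetoid)) (r : Q') :
    ∃ s ∈ S, N.StateEquiv N r (f s) := by
  obtain ⟨s, hs⟩ := ((Nat.bijective_iff_injective_and_card _).2
    ⟨hf.injective_mk_of_pairwise_apart hpair, hcard⟩).2 (Quotient.mk _ r)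
  exact ⟨s, s.2, fun σ => (Quotient.exact hs σ).symm⟩

end Mealy

theorem statement_17_general {QT QM I O : Type} [Fintype QT] [Fintype QM]
    (M : Mealy QM I O)
    (T : Mealy QT I O)
    (f : QT → QM) (hf : T.FunSim M f)
    (S : Set QT) (hpair : ∀ p ∈ S, ∀ q ∈ S, p ≠ q → T.Apart p q)
    (hcard : Nat.card ↥S = Nat.card (Quotient M.equivSetoid))
    (p q' : QT)
    (hap : ∀ s ∈ S, s ≠ q' → T.Apart p s) :
    M.StateEquiv M (f p) (f q') := by
  obtain ⟨s, hs, hequiv⟩ := hf.exists_mem_stateEquiv_of_card_eq hpair hcard (f p)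
  obtain rfl : s = q' := by
    by_contra hne
    exact (hf.apart (hap s hs hne)).not_stateEquiv hequiv
  exact hequiv

/-- Let `M` be a complete Mealy machine whose relation `≈` has
exactly `n` classes, `T` a tree with a functional simulation `f : T → M`, and
`S ⊆ Q^T` pairwise apart with `|S| = n`.  If `p` is apart from every state of
`S` except one state `q' ∈ S`, then `f p ≈ f q'`. -/
theorem statement_17 {QT QM I O : Type} [Fintype I] [Fintype QT] [Fintype QM]
    (M : Mealy QM I O) (hM : M.Complete)
    (T : Mealy QT I O) (htree : T.IsTree)
    (f : QT → QM) (hf : T.FunSim M f)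
    (S : Set QT) (hpair : ∀ p ∈ S, ∀ q ∈ S, p ≠ q → T.Apart p q)
    (hcard : Nat.card ↥S = Nat.card (Quotient M.equivSetoid))
    (p q' : QT) (hq' : q' ∈ S) (hnap : ¬ T.Apart p q')
    (hap : ∀ s ∈ S, s ≠ q' → T.Apart p s) :
    M.StateEquiv M (f p) (f q') :=
  statement_17_general M T f hf S hpair hcard p q' hap
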